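/- arXiv:1705.08299 — 10 statements merged into one kernel-verified Lean document; each statement's English description precedes it below -/
import Mathlib

section
/- Let (A, ·) be a finite-dimensional left-symmetric algebra. On the direct sum A ⊕ A* define a bracket by [x+ξ, y+η] = [x,y] + L*_x η - L*_y ξ, where [x,y] = x·y - y·x and L*_x is the dual map of left multiplication, ⟨L*_x ξ, y⟩ = -⟨ξ, x·y⟩. Then this bracket makes A ⊕ A* a Lie algebra, and the skew-symmetric bilinear form ω(x+ξ, y+η) = ⟨ξ, y⟩ - ⟨η, x⟩ is a nondegenerate 2-cocycle on this Lie algebra; that is, ω([e₁,e₂], e₃) - ω([e₁,e₃], e₂) + ω([e₂,e₃], e₁) = 0 for all e₁, e₂, e₃ ∈ A ⊕ A*. -/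
/-- For a finite-dimensional left-symmetric algebra `A`, the bracket
`[x+ξ, y+η] = [x,y] + L*_x η - L*_y ξ` on `A ⊕ A*` (with `⟨L*_x ξ, y⟩ = -⟨ξ, x·y⟩`)
is a Lie bracket, and `ω(x+ξ,y+η) = ⟨ξ,y⟩ - ⟨η,x⟩` is a nondegenerate 2-cocycle. -/
theorem semidirect_symplectic_lie {k A : Type*} [Field k] [AddCommGroup A] [Module k A]
    [FiniteDimensional k A]
    (mul : A →ₗ[k] A →ₗ[k] A)
    (lsym : ∀ x y z : A,
      mul x (mul y z) - mul (mul x y) z = mul y (mul x z) - mul (mul y x) z)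
    (br : A × Module.Dual k A → A × Module.Dual k A → A × Module.Dual k A)
    (hbr : ∀ e f, br e f =
      (mul e.1 f.1 - mul f.1 e.1, -(f.2.comp (mul e.1)) + e.2.comp (mul f.1)))
    (ω : A × Module.Dual k A → A × Module.Dual k A → k)
    (hω : ∀ e f, ω e f = e.2 f.1 - f.2 e.1) :
    (∀ e₁ e₂ e₃, br (br e₁ e₂) e₃ + br (br e₂ e₃) e₁ + br (br e₃ e₁) e₂ = 0) ∧
    (∀ e₁ e₂, ω e₁ e₂ = - ω e₂ e₁) ∧
    (∀ e₁ e₂ e₃, ω (br e₁ e₂) e₃ - ω (br e₁ e₃) e₂ + ω (br e₂ e₃) e₁ = 0) ∧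
    (∀ e, (∀ f, ω e f = 0) → e = 0) := by
  refine ⟨?_, ?_, ?_, ?_⟩
  · rintro ⟨x, ξ⟩ ⟨y, η⟩ ⟨z, ζ⟩
    simp only [hbr, Prod.ext_iff, Prod.fst_add, Prod.snd_add]
    constructor
    · simp only [map_sub, LinearMap.sub_apply, Prod.fst_zero]
      have h1 := lsym x y z
      have h2 := lsym y z x
      have h3 := lsym z x y
      linear_combination (norm := abel) -h1 - h2 - h3
    · ext w
      simp only [LinearMap.add_apply, LinearMap.neg_apply, LinearMap.comp_apply,
        LinearMap.sub_apply, map_sub, Prod.snd_zero, LinearMap.zero_apply]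
      have h1 := congrArg ξ (lsym y z w)
      have h2 := congrArg η (lsym z x w)
      have h3 := congrArg ζ (lsym x y w)
      simp only [map_sub] at h1 h2 h3
      linear_combination h1 + h2 + h3
  · rintro ⟨x, ξ⟩ ⟨y, η⟩
    simp only [hω]
    ring
  · rintro ⟨x, ξ⟩ ⟨y, η⟩ ⟨z, ζ⟩
    simp only [hω, hbr, LinearMap.add_apply, LinearMap.neg_apply, LinearMap.comp_apply,
      map_sub]
    ring
  · rintro ⟨x, ξ⟩ h
    have hx : ∀ η : Module.Dual k A, η x = 0 := by
      intro η
      have := h (0, η)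
      simp [hω] at this
      simpa using this
    have hξ : ∀ y : A, ξ y = 0 := by
      intro y
      have := h (y, 0)
      simpa [hω] using this
    have : x = 0 := (Module.forall_dual_apply_eq_zero_iff k x).mp hx
    refine Prod.ext this ?_
    exact LinearMap.ext hξ
end

section
/- Let (g, [·,·]) be a Lie algebra equipped with a nondegenerate skew-symmetric 2-cocycle ω. Define a new multiplication on g by requiring ω(x ⋆ y, z) = -ω(y, [x,z]) for all x, y, z ∈ g. Then (g, ⋆) is a left-symmetric algebra whose commutator recovers the original Lie bracket: x ⋆ y - y ⋆ x = [x,y]. -/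
/-- A Lie algebra with a nondegenerate skew-symmetric 2-cocycle `ω` acquires a
left-symmetric multiplication `⋆` defined by `ω(x ⋆ y, z) = -ω(y, [x,z])`, whose
commutator recovers the Lie bracket. -/
theorem symplectic_lie_gives_left_symmetric {k g : Type*} [Field k]
    [AddCommGroup g] [Module k g]
    (br : g →ₗ[k] g →ₗ[k] g)
    (skew : ∀ x y, br x y = - br y x)
    (jacobi : ∀ x y z, br (br x y) z + br (br y z) x + br (br z x) y = 0)
    (ω : g →ₗ[k] g →ₗ[k] k)
    (ωskew : ∀ x y, ω x y = - ω y x)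
    (cocycle : ∀ x y z, ω (br x y) z - ω (br x z) y + ω (br y z) x = 0)
    (nondeg : ∀ x, (∀ y, ω x y = 0) → x = 0)
    (star : g → g → g)
    (hstar : ∀ x y z, ω (star x y) z = - ω y (br x z)) :
    (∀ x y z, star (x + y) z = star x z + star y z) ∧
    (∀ x y z, star x (y + z) = star x y + star x z) ∧
    (∀ (c : k) (x y : g), star (c • x) y = c • star x y) ∧
    (∀ (c : k) (x y : g), star x (c • y) = c • star x y) ∧
    (∀ x y z, star x (star y z) - star (star x y) z
      = star y (star x z) - star (star y x) z) ∧
    (∀ x y, star x y - star y x = br x y) := by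
  -- extensionality via nondegeneracy
  have ext : ∀ a b : g, (∀ w, ω a w = ω b w) → a = b := by
    intro a b h
    have h0 : ∀ w, ω (a - b) w = 0 := by
      intro w
      simp [map_sub, LinearMap.sub_apply, h w]
    exact sub_eq_zero.mp (nondeg (a - b) h0)
  -- commutator recovers the bracket
  have hcomm : ∀ x y, star x y - star y x = br x y := by
    intro x y
    apply ext
    intro w
    have h1 : ω (star x y - star y x) w = ω (star x y) w - ω (star y x) w := by
      simp [map_sub, LinearMap.sub_apply]
    rw [h1, hstar, hstar]
    have hc := cocycle x y w
    have e1 : ω y (br x w) = - ω (br x w) y := ωskew y (br x w)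
    have e2 : ω x (br y w) = - ω (br y w) x := ωskew x (br y w)
    linear_combination e2 - e1 - hc
  refine ⟨?_, ?_, ?_, ?_, ?_, hcomm⟩
  · intro x y z
    apply ext
    intro w
    simp [map_add, LinearMap.add_apply, hstar]
    ring
  · intro x y z
    apply ext
    intro w
    simp [map_add, LinearMap.add_apply, hstar]
    ring
  · intro c x y
    apply ext
    intro w
    simp [map_smul, LinearMap.smul_apply, hstar]
  · intro c x y
    apply ext
    intro w
    simp [map_smul, LinearMap.smul_apply, hstar]
  · intro x y z
    apply ext
    intro w
    have hL : ω (star x (star y z) - star (star x y) z) w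
        = ω (star x (star y z)) w - ω (star (star x y) z) w := by
      simp [map_sub, LinearMap.sub_apply]
    have hR : ω (star y (star x z) - star (star y x) z) w
        = ω (star y (star x z)) w - ω (star (star y x) z) w := by
      simp [map_sub, LinearMap.sub_apply]
    rw [hL, hR, hstar, hstar, hstar, hstar, hstar, hstar]
    -- rewrite star x y using the commutator relation
    have hxy : star x y = br x y + star y x := by
      have := hcomm x y
      rw [sub_eq_iff_eq_add] at this
      exact this
    have hsplit : ω z (br (star x y) w)
        = ω z (br (br x y) w) + ω z (br (star y x) w) := by
      rw [hxy]
      simp [map_add, LinearMap.add_apply]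
    -- Jacobi applied through ω z
    have j : ω z (br (br x y) w) + ω z (br (br y w) x) + ω z (br (br w x) y) = 0 := by
      have hj := jacobi x y w
      have : ω z (br (br x y) w + br (br y w) x + br (br w x) y) = 0 := by
        rw [hj]; simp
      simpa [map_add] using this
    have e1 : ω z (br (br y w) x) = - ω z (br x (br y w)) := by
      rw [skew (br y w) x]; simp
    have e2 : ω z (br (br w x) y) = ω z (br y (br x w)) := by
      rw [skew w x]
      simp [map_neg, LinearMap.neg_apply, skew (br x w) y]
    rw [hsplit]
    rw [e1, e2] at j
    linear_combination j
end

section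
/- Let (A, ·) be a finite-dimensional left-symmetric algebra and H ∈ A ⊗ A symmetric with ⟦H,H⟧ = 0 (the S-equation), where ⟦H,H⟧(ξ₁,ξ₂,ξ₃) = ⟨ξ₁, H♯(ξ₂)·H♯(ξ₃)⟩ - ⟨ξ₂, H♯(ξ₁)·H♯(ξ₃)⟩ - ⟨ξ₃, [H♯(ξ₁), H♯(ξ₂)]⟩. Define a multiplication on A* by ξ ·_H η = L*_{H♯(ξ)} η - R*_{H♯(η)} ξ, where L* is the coadjoint action of the sub-adjacent Lie algebra, ⟨L*_x η, y⟩ = -⟨η, [x,y]⟩, and ⟨R*_x ξ, y⟩ = -⟨ξ, y·x⟩. Then (A*, ·_H) is a left-symmetric algebra and H♯ : A* → A is a homomorphism of left-symmetric algebras, i.e. H♯(ξ ·_H η) = H♯(ξ) · H♯(η). -/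
/-- If a symmetric `H ∈ A ⊗ A` satisfies the S-equation `⟦H,H⟧ = 0`, then
`ξ ·_H η = 𝔏_{H♯ξ} η - R*_{H♯η} ξ` makes `A*` a left-symmetric algebra and
`H♯` is a homomorphism of left-symmetric algebras. -/
theorem S_equation_gives_LSA_on_dual {k A : Type*} [Field k] [AddCommGroup A]
    [Module k A] [FiniteDimensional k A]
    (mul : A →ₗ[k] A →ₗ[k] A)
    (lsym : ∀ x y z : A,
      mul x (mul y z) - mul (mul x y) z = mul y (mul x z) - mul (mul y x) z)
    (Hs : Module.Dual k A →ₗ[k] A)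
    (Hsym : ∀ ξ η : Module.Dual k A, η (Hs ξ) = ξ (Hs η))
    (SE : ∀ ξ₁ ξ₂ ξ₃ : Module.Dual k A,
      ξ₁ (mul (Hs ξ₂) (Hs ξ₃)) - ξ₂ (mul (Hs ξ₁) (Hs ξ₃))
      - ξ₃ (mul (Hs ξ₁) (Hs ξ₂) - mul (Hs ξ₂) (Hs ξ₁)) = 0)
    (mulH : Module.Dual k A → Module.Dual k A → Module.Dual k A)
    (hmulH : ∀ (ξ η : Module.Dual k A) (z : A),
      mulH ξ η z = -η (mul (Hs ξ) z - mul z (Hs ξ)) + ξ (mul z (Hs η))) :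
    (∀ ξ η ζ : Module.Dual k A,
      mulH ξ (mulH η ζ) - mulH (mulH ξ η) ζ
        = mulH η (mulH ξ ζ) - mulH (mulH η ξ) ζ) ∧
    (∀ ξ η : Module.Dual k A, Hs (mulH ξ η) = mul (Hs ξ) (Hs η)) := by
  have hom : ∀ ξ η : Module.Dual k A, Hs (mulH ξ η) = mul (Hs ξ) (Hs η) := by
    intro ξ η
    rw [← sub_eq_zero, ← Module.forall_dual_apply_eq_zero_iff k]
    intro ζ
    have h1 := SE ζ ξ η
    have h2 := hmulH ξ η (Hs ζ)
    have h3 := Hsym (mulH ξ η) ζ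
    simp only [map_sub] at h1 h2 ⊢
    rw [h3, h2]
    linear_combination -h1
  refine ⟨?_, hom⟩
  intro ξ η ζ
  ext z
  set a := Hs ξ
  set b := Hs η
  set c := Hs ζ
  have key : ∀ (φ : Module.Dual k A) (x y : A),
      φ (mul x (mul y z)) - φ (mul (mul x y) z)
        = φ (mul y (mul x z)) - φ (mul (mul y x) z) := by
    intro φ x y
    have := congrArg φ (lsym x y z)
    simpa [map_sub] using this
  have key2 : ∀ (φ : Module.Dual k A) (x y : A),
      φ (mul x (mul z y)) - φ (mul (mul x z) y)
        = φ (mul z (mul x y)) - φ (mul (mul z x) y) := by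
    intro φ x y
    have := congrArg φ (lsym x z y)
    simpa [map_sub] using this
  simp only [LinearMap.sub_apply, hmulH, hom, map_sub, map_neg, map_add]
  have k1 := key ζ a b
  have k2 := key2 ζ a b
  have k3 := key2 ζ b a
  have k4 := key2 η a c
  have k5 := key2 ξ b c
  linear_combination -k1 + k2 - k3 + k4 - k5
end

section
/- Let (A, ·) be a finite-dimensional left-symmetric algebra, with H ∈ A ⊗ A symmetric satisfying the S-equation ⟦H,H⟧ = 0, and let ·_H be the induced left-symmetric multiplication on A* (ξ ·_H η determined by ⟨ξ ·_H η, y⟩ = -⟨η, [H♯(ξ), y]⟩ + ⟨ξ, y · H♯(η)⟩ for all y ∈ A). Then H♯ intertwines the commutator brackets: H♯([ξ, η]_H) = [H♯(ξ), H♯(η)] for all ξ, η ∈ A*, where [ξ,η]_H = ξ·_H η - η·_H ξ and [x,y] = x·y - y·x. -/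
/-- If a symmetric `H ∈ A ⊗ A` satisfies the S-equation, then `H♯` intertwines the
commutator brackets: `H♯([ξ,η]_H) = [H♯(ξ), H♯(η)]`. -/
theorem Hsharp_intertwines_commutators {k A : Type*} [Field k] [AddCommGroup A]
    [Module k A] [FiniteDimensional k A]
    (mul : A →ₗ[k] A →ₗ[k] A)
    (lsym : ∀ x y z : A,
      mul x (mul y z) - mul (mul x y) z = mul y (mul x z) - mul (mul y x) z)
    (Hs : Module.Dual k A →ₗ[k] A)
    (Hsym : ∀ ξ η : Module.Dual k A, η (Hs ξ) = ξ (Hs η))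
    (SE : ∀ ξ₁ ξ₂ ξ₃ : Module.Dual k A,
      ξ₁ (mul (Hs ξ₂) (Hs ξ₃)) - ξ₂ (mul (Hs ξ₁) (Hs ξ₃))
      - ξ₃ (mul (Hs ξ₁) (Hs ξ₂) - mul (Hs ξ₂) (Hs ξ₁)) = 0)
    (mulH : Module.Dual k A → Module.Dual k A → Module.Dual k A)
    (hmulH : ∀ (ξ η : Module.Dual k A) (z : A),
      mulH ξ η z = -η (mul (Hs ξ) z - mul z (Hs ξ)) + ξ (mul z (Hs η))) :
    ∀ ξ η : Module.Dual k A,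
      Hs (mulH ξ η - mulH η ξ) = mul (Hs ξ) (Hs η) - mul (Hs η) (Hs ξ) := by
  intro ξ η
  rw [← sub_eq_zero, ← Module.forall_dual_apply_eq_zero_iff k]
  intro ζ
  have h1 := Hsym (mulH ξ η - mulH η ξ) ζ
  have h2 := SE ξ η ζ
  simp only [map_sub, LinearMap.sub_apply, hmulH] at *
  linear_combination h1 + h2
end

section
/- Let (g, ·_g) and (g*, ·_{g*}) be finite-dimensional left-symmetric algebras in duality forming a left-symmetric bialgebra: the cocycle conditions δ_*[x,y]_g = 𝔏_x δ_* y - 𝔏_y δ_* x and δ[ξ,η]_{g*} = 𝔏_ξ δη - 𝔏_η δξ hold, where δ_* : g → g ⊗ g is dual to the multiplication of g*, δ : g* → g* ⊗ g* is dual to the multiplication of g, and 𝔏 is the Lie-derivative action on tensors. Then on g ⊕ g* the bracket [x+ξ, y+η] = [ξ,η]_{g*} + L*_x η - L*_y ξ + 𝔏*_ξ y - 𝔏*_η x + [x,y]_g (where ⟨L*_x η, y⟩ = -⟨η, x·_g y⟩ + 0, ⟨𝔏*_ξ y, η⟩ = -⟨y, ξ ·_{g*} η⟩, and [x,y]_g,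 [ξ,η]_{g*} are the commutators) satisfies the Jacobi identity, making g ⊕ g* a Lie algebra; moreover the form ω(x+ξ, y+η) = ⟨ξ,y⟩ - ⟨η,x⟩ is a 2-cocycle on this Lie algebra. -/
set_option maxHeartbeats 3200000 in
/-- For a left-symmetric bialgebra `(g, g*)`, the matched-pair bracket
`[x+ξ, y+η] = [ξ,η]_{g*} + L*_x η - L*_y ξ + 𝔏*_ξ y - 𝔏*_η x + [x,y]_g` on `g ⊕ g*`
satisfies the Jacobi identity, and `ω(x+ξ, y+η) = ⟨ξ,y⟩ - ⟨η,x⟩` is a 2-cocycle. -/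
theorem LSbialgebra_double_symplectic_lie {k A : Type*} [Field k] [AddCommGroup A]
    [Module k A] [FiniteDimensional k A]
    (mulA : A →ₗ[k] A →ₗ[k] A)
    (lsymA : ∀ x y z : A,
      mulA x (mulA y z) - mulA (mulA x y) z = mulA y (mulA x z) - mulA (mulA y x) z)
    (mulD : Module.Dual k A →ₗ[k] Module.Dual k A →ₗ[k] Module.Dual k A)
    (lsymD : ∀ ξ η ζ : Module.Dual k A,
      mulD ξ (mulD η ζ) - mulD (mulD ξ η) ζ = mulD η (mulD ξ ζ) - mulD (mulD η ξ) ζ)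
    -- `Ltd ξ x` represents the functional `α ↦ ⟨x, ξ ·_{g*} α⟩` on `g*`, as an element of `g`
    (Ltd : Module.Dual k A → A → A)
    (hLtd : ∀ (ξ : Module.Dual k A) (x : A) (α : Module.Dual k A),
      α (Ltd ξ x) = (mulD ξ α) x)
    -- `adD ξ y` represents the functional `β ↦ ⟨y, [ξ,β]_{g*}⟩` on `g*`, as an element of `g`
    (adD : Module.Dual k A → A → A)
    (hadD : ∀ (ξ : Module.Dual k A) (y : A) (β : Module.Dual k A),
      β (adD ξ y) = (mulD ξ β - mulD β ξ) y)
    -- cocycle condition `δ_*[x,y]_g = 𝔏_x δ_* y - 𝔏_y δ_* x`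
    (cond2 : ∀ (x y : A) (ξ η : Module.Dual k A),
      (mulD ξ η) (mulA x y - mulA y x)
        = ((mulD (ξ.comp (mulA x)) η) y
            + (mulD ξ (η.comp (mulA x - mulA.flip x))) y)
          - ((mulD (ξ.comp (mulA y)) η) x
            + (mulD ξ (η.comp (mulA y - mulA.flip y))) x))
    -- cocycle condition `δ[ξ,η]_{g*} = 𝔏_ξ δη - 𝔏_η δξ`
    (cond1 : ∀ (ξ η : Module.Dual k A) (x y : A),
      (mulD ξ η - mulD η ξ) (mulA x y)
        = (η (mulA (Ltd ξ x) y) + η (mulA x (adD ξ y)))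
          - (ξ (mulA (Ltd η x) y) + ξ (mulA x (adD η y))))
    -- `Lstar2 ξ y` is `𝔏*_ξ y ∈ g`, i.e. `⟨𝔏*_ξ y, η⟩ = -⟨y, ξ ·_{g*} η⟩`
    (Lstar2 : Module.Dual k A → A → A)
    (hLstar2 : ∀ (ξ : Module.Dual k A) (y : A) (η : Module.Dual k A),
      η (Lstar2 ξ y) = -((mulD ξ η) y))
    (Br : A × Module.Dual k A → A × Module.Dual k A → A × Module.Dual k A)
    (hBr : ∀ e f, Br e f =
      ((mulA e.1 f.1 - mulA f.1 e.1) + Lstar2 e.2 f.1 - Lstar2 f.2 e.1,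
       (mulD e.2 f.2 - mulD f.2 e.2)
         + (-(f.2.comp (mulA e.1))) - (-(e.2.comp (mulA f.1)))))
    (ω : A × Module.Dual k A → A × Module.Dual k A → k)
    (hω : ∀ e f, ω e f = e.2 f.1 - f.2 e.1) :
    (∀ e₁ e₂ e₃, Br (Br e₁ e₂) e₃ + Br (Br e₂ e₃) e₁ + Br (Br e₃ e₁) e₂ = 0) ∧
    (∀ e₁ e₂ e₃, ω (Br e₁ e₂) e₃ - ω (Br e₁ e₃) e₂ + ω (Br e₂ e₃) e₁ = 0) := by
  -- evaluation lemmas turning `Lstar2` occurrences into scalar data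
  have LA1 : ∀ (α ξ : Module.Dual k A) (y z : A),
      α (mulA (Lstar2 ξ y) z) = -((mulD ξ (α.comp (mulA.flip z))) y) := by
    intro α ξ y z
    have h := hLstar2 ξ y (α.comp (mulA.flip z))
    simpa [LinearMap.comp_apply, LinearMap.flip_apply] using h
  have LA2 : ∀ (α ξ : Module.Dual k A) (y z : A),
      α (mulA z (Lstar2 ξ y)) = -((mulD ξ (α.comp (mulA z))) y) := by
    intro α ξ y z
    have h := hLstar2 ξ y (α.comp (mulA z))
    simpa [LinearMap.comp_apply] using h
  -- reduced form of cond2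
  have C2 : ∀ (x y : A) (ξ η : Module.Dual k A),
      (mulD ξ η) (mulA x y) - (mulD ξ η) (mulA y x)
        = ((mulD (ξ.comp (mulA x)) η) y
            + ((mulD ξ (η.comp (mulA x))) y - (mulD ξ (η.comp (mulA.flip x))) y))
          - ((mulD (ξ.comp (mulA y)) η) x
            + ((mulD ξ (η.comp (mulA y))) x - (mulD ξ (η.comp (mulA.flip y))) x)) := by
    intro x y ξ η
    have h := cond2 x y ξ η
    simp only [map_sub, LinearMap.comp_sub, LinearMap.sub_apply] at h
    linear_combination h
  -- reduced form of cond1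
  have hA : ∀ (ξ : Module.Dual k A) (x y : A) (η : Module.Dual k A),
      η (mulA (Ltd ξ x) y) = (mulD ξ (η.comp (mulA.flip y))) x := by
    intro ξ x y η
    have h := hLtd ξ x (η.comp (mulA.flip y))
    simpa [LinearMap.comp_apply, LinearMap.flip_apply] using h
  have hB : ∀ (ξ : Module.Dual k A) (y x : A) (η : Module.Dual k A),
      η (mulA x (adD ξ y))
        = (mulD ξ (η.comp (mulA x))) y - (mulD (η.comp (mulA x)) ξ) y := by
    intro ξ y x η
    have h := hadD ξ y (η.comp (mulA x))
    simpa [LinearMap.comp_apply, LinearMap.sub_apply] using h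
  have C1 : ∀ (ξ η : Module.Dual k A) (x y : A),
      (mulD ξ η) (mulA x y) - (mulD η ξ) (mulA x y)
        = ((mulD ξ (η.comp (mulA.flip y))) x
            + ((mulD ξ (η.comp (mulA x))) y - (mulD (η.comp (mulA x)) ξ) y))
          - ((mulD η (ξ.comp (mulA.flip y))) x
            + ((mulD η (ξ.comp (mulA x))) y - (mulD (ξ.comp (mulA x)) η) y)) := by
    intro ξ η x y
    have h := cond1 ξ η x y
    simp only [LinearMap.sub_apply, hA, hB] at h
    linear_combination h
  -- applied left-symmetry
  have SA : ∀ (α : Module.Dual k A) (x y z : A),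
      α (mulA x (mulA y z)) - α (mulA (mulA x y) z)
        = α (mulA y (mulA x z)) - α (mulA (mulA y x) z) := by
    intro α x y z
    have h := congrArg α (lsymA x y z)
    simpa [map_sub] using h
  have SD : ∀ (ξ η ζ : Module.Dual k A) (x : A),
      (mulD ξ (mulD η ζ)) x - (mulD (mulD ξ η) ζ) x
        = (mulD η (mulD ξ ζ)) x - (mulD (mulD η ξ) ζ) x := by
    intro ξ η ζ x
    have h := LinearMap.congr_fun (lsymD ξ η ζ) x
    simpa [LinearMap.sub_apply] using h
  constructor
  · intro e₁ e₂ e₃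
    obtain ⟨x1, ξ1⟩ := e₁
    obtain ⟨x2, ξ2⟩ := e₂
    obtain ⟨x3, ξ3⟩ := e₃
    rw [Prod.ext_iff]
    simp only [hBr, Prod.fst_add, Prod.snd_add, Prod.fst_zero, Prod.snd_zero]
    constructor
    · rw [← Module.forall_dual_apply_eq_zero_iff k]
      intro α
      simp only [map_add, map_sub, map_neg, LinearMap.add_apply, LinearMap.sub_apply,
        LinearMap.neg_apply, LinearMap.comp_apply, hLstar2, LA1, LA2, neg_neg]
      linear_combination (C2 x1 x2 ξ3 α) - (C2 x1 x3 ξ2 α) + (C2 x2 x3 ξ1 α)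
        - (SA α x1 x2 x3) + (SA α x1 x3 x2) - (SA α x2 x3 x1)
        + (SD ξ1 ξ2 α x3) - (SD ξ1 ξ3 α x2) + (SD ξ2 ξ3 α x1)
    · apply LinearMap.ext
      intro w
      simp only [map_add, map_sub, map_neg, LinearMap.add_apply, LinearMap.sub_apply,
        LinearMap.neg_apply, LinearMap.comp_apply, LinearMap.zero_apply,
        hLstar2, LA1, LA2, neg_neg]
      linear_combination (C1 ξ1 ξ2 x3 w) - (C1 ξ1 ξ3 x2 w) + (C1 ξ2 ξ3 x1 w)
        + (SA ξ1 x2 x3 w) - (SA ξ2 x1 x3 w) + (SA ξ3 x1 x2 w)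
        - (SD ξ1 ξ2 ξ3 w) + (SD ξ1 ξ3 ξ2 w) - (SD ξ2 ξ3 ξ1 w)
  · intro e₁ e₂ e₃
    obtain ⟨x1, ξ1⟩ := e₁
    obtain ⟨x2, ξ2⟩ := e₂
    obtain ⟨x3, ξ3⟩ := e₃
    simp only [hω, hBr, map_add, map_sub, map_neg, LinearMap.add_apply, LinearMap.sub_apply,
      LinearMap.neg_apply, LinearMap.comp_apply, hLstar2, LA1, LA2, neg_neg]
    ring
end

section
/- Let (E, ⋆, (·,·)_-) be a pre-symplectic algebra (the point case of a pre-symplectic algebroid): a vector space E with a bilinear multiplication ⋆ and a nondegenerate skew-symmetric bilinear form (·,·)_- such that (i) the associator of ⋆ is symmetric in its first two arguments, and (ii) 0 = (e₁⋆e₂, e₃)_- + (e₂, [e₁,e₃]_E)_- where [e₁,e₃]_E = e₁⋆e₃ - e₃⋆e₁ (the anchor and D-terms vanish over a point). Then (E, [·,·]_E) is a Lie algebra and (·,·)_- is a nondegenerate 2-cocycle, i.e. (E, [·,·]_E, (·,·)_-) is a symplectic Lie algebra. -/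
/-- A pre-symplectic algebra (point case of a pre-symplectic algebroid) gives rise to a
symplectic Lie algebra: the commutator bracket `[e₁,e₂]_E = e₁⋆e₂ - e₂⋆e₁` satisfies
the Jacobi identity and `(·,·)_-` is a nondegenerate 2-cocycle. -/
theorem presymplectic_algebra_gives_symplectic_lie {k E : Type*} [Field k]
    [AddCommGroup E] [Module k E]
    (star : E →ₗ[k] E →ₗ[k] E)
    (ωm : E →ₗ[k] E →ₗ[k] k)
    (ωskew : ∀ e f, ωm e f = - ωm f e)
    (ωnondeg : ∀ e, (∀ f, ωm e f = 0) → e = 0)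
    (ax1 : ∀ e₁ e₂ e₃ : E,
      star e₁ (star e₂ e₃) - star (star e₁ e₂) e₃
        = star e₂ (star e₁ e₃) - star (star e₂ e₁) e₃)
    (ax2 : ∀ e₁ e₂ e₃ : E,
      0 = ωm (star e₁ e₂) e₃ + ωm e₂ (star e₁ e₃ - star e₃ e₁)) :
    (∀ e₁ e₂ e₃ : E,
      (star (star e₁ e₂ - star e₂ e₁) e₃ - star e₃ (star e₁ e₂ - star e₂ e₁))
      + (star (star e₂ e₃ - star e₃ e₂) e₁ - star e₁ (star e₂ e₃ - star e₃ e₂))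
      + (star (star e₃ e₁ - star e₁ e₃) e₂ - star e₂ (star e₃ e₁ - star e₁ e₃)) = 0) ∧
    (∀ e₁ e₂ e₃ : E,
      ωm (star e₁ e₂ - star e₂ e₁) e₃ - ωm (star e₁ e₃ - star e₃ e₁) e₂
        + ωm (star e₂ e₃ - star e₃ e₂) e₁ = 0) ∧
    (∀ e, (∀ f, ωm e f = 0) → e = 0) := by
  refine ⟨?_, ?_, ωnondeg⟩
  · intro x y z
    have h1 := ax1 x y z
    have h2 := ax1 y z x
    have h3 := ax1 z x y
    simp only [map_sub, LinearMap.sub_apply] at *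
    have key :
        (star (star x y) z - star (star y x) z - (star z (star x y) - star z (star y x)))
        + (star (star y z) x - star (star z y) x - (star x (star y z) - star x (star z y)))
        + (star (star z x) y - star (star x z) y - (star y (star z x) - star y (star x z)))
        = (star y (star x z) - star (star y x) z - (star x (star y z) - star (star x y) z))
        + (star z (star y x) - star (star z y) x - (star y (star z x) - star (star y z) x))
        + (star x (star z y) - star (star x z) y - (star z (star x y) - star (star z x) y)) := by
      abel
    rw [key, ← h1, ← h2, ← h3]
    abel
  · intro x y z
    have h1 := ax2 x y z
    have h2 := ax2 y x z
    simp only [map_sub, LinearMap.sub_apply] at *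
    linear_combination -h1 + h2 - ωskew y (star x z) + ωskew y (star z x)
      + ωskew x (star y z) - ωskew x (star z y)
end

section
/- Let (g, ·_g) and (g*, ·_{g*}) be left-symmetric algebras forming a left-symmetric bialgebra. On E = g ⊕ g* define (x+ξ) ⋆ (y+η) = (x·_g y + 𝔏_ξ y - R_η x) + (ξ ·_{g*} η + 𝔏_x η - R_y ξ), where ⟨𝔏_x η, z⟩ = -⟨η, [x,z]_g⟩, ⟨R_y ξ, z⟩ = -⟨ξ, z·_g y⟩, ⟨𝔏_ξ y, ζ⟩ = -⟨y, [ξ,ζ]_{g*}⟩, ⟨R_η x, ζ⟩ = -⟨x, ζ·_{g*}η⟩ (the differential terms dM, dM_* vanish over a point). Then (E, ⋆) together with the form (x+ξ, y+η)_- = ⟨ξ,y⟩ - ⟨η,x⟩ is a pre-symplectic algebra: the associator of ⋆ is symmetric in its first two arguments and ((e₁⋆e₂, e₃)_- + (e₂, [e₁,e₃]_E)_- = 0. -/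
set_option maxHeartbeats 4000000 in
/-- The double of a left-symmetric bialgebra `(g, g*)` is a pre-symplectic algebra:
the multiplication `(x+ξ) ⋆ (y+η) = (x·y + 𝔏_ξ y - R_η x) + (ξ·η + 𝔏_x η - R_y ξ)`
has associator symmetric in its first two arguments and satisfies
`(e₁⋆e₂, e₃)_- + (e₂, [e₁,e₃]_E)_- = 0` for the form `(x+ξ, y+η)_- = ⟨ξ,y⟩ - ⟨η,x⟩`. -/
theorem LSbialgebra_double_presymplectic {k A : Type*} [Field k] [AddCommGroup A]
    [Module k A] [FiniteDimensional k A]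
    (mulA : A →ₗ[k] A →ₗ[k] A)
    (lsymA : ∀ x y z : A,
      mulA x (mulA y z) - mulA (mulA x y) z = mulA y (mulA x z) - mulA (mulA y x) z)
    (mulD : Module.Dual k A →ₗ[k] Module.Dual k A →ₗ[k] Module.Dual k A)
    (lsymD : ∀ ξ η ζ : Module.Dual k A,
      mulD ξ (mulD η ζ) - mulD (mulD ξ η) ζ = mulD η (mulD ξ ζ) - mulD (mulD η ξ) ζ)
    (Ltd : Module.Dual k A → A → A)
    (hLtd : ∀ (ξ : Module.Dual k A) (x : A) (α : Module.Dual k A),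
      α (Ltd ξ x) = (mulD ξ α) x)
    (adD : Module.Dual k A → A → A)
    (hadD : ∀ (ξ : Module.Dual k A) (y : A) (β : Module.Dual k A),
      β (adD ξ y) = (mulD ξ β - mulD β ξ) y)
    -- cocycle condition `δ_*[x,y]_g = 𝔏_x δ_* y - 𝔏_y δ_* x`
    (cond2 : ∀ (x y : A) (ξ η : Module.Dual k A),
      (mulD ξ η) (mulA x y - mulA y x)
        = ((mulD (ξ.comp (mulA x)) η) y
            + (mulD ξ (η.comp (mulA x - mulA.flip x))) y)
          - ((mulD (ξ.comp (mulA y)) η) x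
            + (mulD ξ (η.comp (mulA y - mulA.flip y))) x))
    -- cocycle condition `δ[ξ,η]_{g*} = 𝔏_ξ δη - 𝔏_η δξ`
    (cond1 : ∀ (ξ η : Module.Dual k A) (x y : A),
      (mulD ξ η - mulD η ξ) (mulA x y)
        = (η (mulA (Ltd ξ x) y) + η (mulA x (adD ξ y)))
          - (ξ (mulA (Ltd η x) y) + ξ (mulA x (adD η y))))
    -- `Lg ξ y = 𝔏_ξ y ∈ g`:  `⟨𝔏_ξ y, ζ⟩ = -⟨y, [ξ,ζ]_{g*}⟩`
    (Lg : Module.Dual k A → A → A)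
    (hLg : ∀ (ξ : Module.Dual k A) (y : A) (ζ : Module.Dual k A),
      ζ (Lg ξ y) = -((mulD ξ ζ - mulD ζ ξ) y))
    -- `Rg η x = R_η x ∈ g`:  `⟨R_η x, ζ⟩ = -⟨x, ζ ·_{g*} η⟩`
    (Rg : Module.Dual k A → A → A)
    (hRg : ∀ (η : Module.Dual k A) (x : A) (ζ : Module.Dual k A),
      ζ (Rg η x) = -((mulD ζ η) x))
    (star : A × Module.Dual k A → A × Module.Dual k A → A × Module.Dual k A)
    (hstar : ∀ e f, star e f =
      (mulA e.1 f.1 + Lg e.2 f.1 - Rg f.2 e.1,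
       mulD e.2 f.2 + (-(f.2.comp (mulA e.1 - mulA.flip e.1)))
         - (-(e.2.comp (mulA.flip f.1)))))
    (ωm : A × Module.Dual k A → A × Module.Dual k A → k)
    (hωm : ∀ e f, ωm e f = e.2 f.1 - f.2 e.1) :
    (∀ e₁ e₂ e₃,
      star e₁ (star e₂ e₃) - star (star e₁ e₂) e₃
        = star e₂ (star e₁ e₃) - star (star e₂ e₁) e₃) ∧
    (∀ e₁ e₂ e₃, ωm (star e₁ e₂) e₃ + ωm e₂ (star e₁ e₃ - star e₃ e₁) = 0) := by
  -- pointwise (scalar) forms of the pairing hypotheses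
  have hLg0 : ∀ (ξ : Module.Dual k A) (y : A) (ζ : Module.Dual k A),
      ζ (Lg ξ y) = mulD ζ ξ y - mulD ξ ζ y := by
    intro ξ y ζ
    have h := hLg ξ y ζ
    simp only [LinearMap.sub_apply] at h
    linear_combination h
  have hRg0 : ∀ (η : Module.Dual k A) (x : A) (ζ : Module.Dual k A),
      ζ (Rg η x) = -(mulD ζ η x) := by
    intro η x ζ; exact hRg η x ζ
  have hLgL : ∀ (φ : Module.Dual k A) (x : A) (ξ : Module.Dual k A) (y : A),
      φ (mulA x (Lg ξ y)) = mulD (φ.comp (mulA x)) ξ y - mulD ξ (φ.comp (mulA x)) y := by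
    intro φ x ξ y
    have h := hLg0 ξ y (φ.comp (mulA x))
    simpa only [LinearMap.coe_comp, Function.comp_apply] using h
  have hLgR : ∀ (φ : Module.Dual k A) (w : A) (ξ : Module.Dual k A) (y : A),
      φ (mulA (Lg ξ y) w)
        = mulD (φ.comp (mulA.flip w)) ξ y - mulD ξ (φ.comp (mulA.flip w)) y := by
    intro φ w ξ y
    have h := hLg0 ξ y (φ.comp (mulA.flip w))
    simpa only [LinearMap.coe_comp, Function.comp_apply, LinearMap.flip_apply] using h
  have hRgL : ∀ (φ : Module.Dual k A) (x : A) (η : Module.Dual k A) (v : A),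
      φ (mulA x (Rg η v)) = -(mulD (φ.comp (mulA x)) η v) := by
    intro φ x η v
    have h := hRg0 η v (φ.comp (mulA x))
    simpa only [LinearMap.coe_comp, Function.comp_apply] using h
  have hRgR : ∀ (φ : Module.Dual k A) (w : A) (η : Module.Dual k A) (v : A),
      φ (mulA (Rg η v) w) = -(mulD (φ.comp (mulA.flip w)) η v) := by
    intro φ w η v
    have h := hRg0 η v (φ.comp (mulA.flip w))
    simpa only [LinearMap.coe_comp, Function.comp_apply, LinearMap.flip_apply] using h
  -- scalar forms of the left-symmetry axioms
  have lsymA' : ∀ (φ : Module.Dual k A) (x y z : A),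
      φ (mulA x (mulA y z)) - φ (mulA (mulA x y) z)
        = φ (mulA y (mulA x z)) - φ (mulA (mulA y x) z) := by
    intro φ x y z
    have h := congrArg φ (lsymA x y z)
    simpa only [map_sub] using h
  have lsymD' : ∀ (ξ η θ : Module.Dual k A) (v : A),
      mulD ξ (mulD η θ) v - mulD (mulD ξ η) θ v
        = mulD η (mulD ξ θ) v - mulD (mulD η ξ) θ v := by
    intro ξ η θ v
    have h := DFunLike.congr_fun (lsymD ξ η θ) v
    simpa only [LinearMap.sub_apply] using h
  -- scalar form of the first cocycle condition
  have cond1' : ∀ (ξ η : Module.Dual k A) (x y : A),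
      mulD ξ η (mulA x y) - mulD η ξ (mulA x y)
        = mulD ξ (η.comp (mulA.flip y)) x + mulD ξ (η.comp (mulA x)) y
            - mulD (η.comp (mulA x)) ξ y
          - mulD η (ξ.comp (mulA.flip y)) x - mulD η (ξ.comp (mulA x)) y
            + mulD (ξ.comp (mulA x)) η y := by
    intro ξ η x y
    have h := cond1 ξ η x y
    have h1 := hLtd ξ x (η.comp (mulA.flip y))
    have h2 := hadD ξ y (η.comp (mulA x))
    have h3 := hLtd η x (ξ.comp (mulA.flip y))
    have h4 := hadD η y (ξ.comp (mulA x))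
    simp only [LinearMap.coe_comp, Function.comp_apply, LinearMap.flip_apply,
      LinearMap.sub_apply] at h h1 h2 h3 h4
    linear_combination h + h1 + h2 - h3 - h4
  -- scalar form of the second cocycle condition
  have cond2' : ∀ (x y : A) (ξ η : Module.Dual k A),
      mulD ξ η (mulA x y) - mulD ξ η (mulA y x)
        = mulD (ξ.comp (mulA x)) η y + mulD ξ (η.comp (mulA x)) y
            - mulD ξ (η.comp (mulA.flip x)) y
          - mulD (ξ.comp (mulA y)) η x - mulD ξ (η.comp (mulA y)) x
            + mulD ξ (η.comp (mulA.flip y)) x := by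
    intro x y ξ η
    have h := cond2 x y ξ η
    simp only [LinearMap.comp_sub, map_sub, LinearMap.sub_apply] at h
    linear_combination h
  constructor
  · -- associator symmetry
    rintro ⟨x₁, ξ₁⟩ ⟨x₂, ξ₂⟩ ⟨x₃, ξ₃⟩
    have key : ∀ p q : A × Module.Dual k A,
        (∀ φ : Module.Dual k A, φ p.1 = φ q.1) → (∀ v : A, p.2 v = q.2 v) → p = q := by
      rintro ⟨p1, p2⟩ ⟨q1, q2⟩ h1 h2
      have e1 : p1 = q1 := by
        rw [← sub_eq_zero]
        rw [← Module.forall_dual_apply_eq_zero_iff k (p1 - q1)]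
        intro φ
        simp only [map_sub]
        simpa using sub_eq_zero.mpr (h1 φ)
      have e2 : p2 = q2 := LinearMap.ext h2
      simp [e1, e2]
    have pfst : ∀ p q : A × Module.Dual k A, (p - q).1 = p.1 - q.1 := fun _ _ => rfl
    have psnd : ∀ p q : A × Module.Dual k A, (p - q).2 = p.2 - q.2 := fun _ _ => rfl
    apply key
    · intro φ
      simp only [hstar, pfst, psnd, map_add, map_sub, map_neg, LinearMap.add_apply,
        LinearMap.sub_apply, LinearMap.neg_apply, LinearMap.comp_sub, LinearMap.coe_comp,
        Function.comp_apply, LinearMap.flip_apply, hLgL, hLgR, hRgL, hRgR, hLg0, hRg0]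
      linear_combination (lsymA' φ x₁ x₂ x₃) - (lsymD' ξ₁ ξ₂ φ x₃) + (lsymD' ξ₁ φ ξ₂ x₃)
        + (lsymD' ξ₁ φ ξ₃ x₂) - (lsymD' ξ₂ φ ξ₁ x₃) - (lsymD' ξ₂ φ ξ₃ x₁)
        - (cond1' ξ₁ φ x₂ x₃) + (cond1' ξ₂ φ x₁ x₃) + (cond1' ξ₃ φ x₁ x₂)
        - (cond1' ξ₃ φ x₂ x₁) - (cond2' x₁ x₂ ξ₃ φ)
    · intro v
      simp only [hstar, pfst, psnd, map_add, map_sub, map_neg, LinearMap.add_apply,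
        LinearMap.sub_apply, LinearMap.neg_apply, LinearMap.comp_sub, LinearMap.coe_comp,
        Function.comp_apply, LinearMap.flip_apply, hLgL, hLgR, hRgL, hRgR, hLg0, hRg0]
      linear_combination (-(lsymA' ξ₁ x₂ v x₃)) + (lsymA' ξ₂ x₁ v x₃) - (lsymA' ξ₃ x₁ x₂ v)
        + (lsymA' ξ₃ x₁ v x₂) - (lsymA' ξ₃ x₂ v x₁) + (lsymD' ξ₁ ξ₂ ξ₃ v)
        - (cond1' ξ₁ ξ₂ v x₃) + (cond2' x₂ v ξ₁ ξ₃) - (cond2' x₁ v ξ₂ ξ₃)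
  · -- the form identity
    intro e₁ e₂ e₃
    have pfst : ∀ p q : A × Module.Dual k A, (p - q).1 = p.1 - q.1 := fun _ _ => rfl
    have psnd : ∀ p q : A × Module.Dual k A, (p - q).2 = p.2 - q.2 := fun _ _ => rfl
    simp only [hωm, hstar, pfst, psnd, LinearMap.sub_apply,
      LinearMap.add_apply, LinearMap.neg_apply, LinearMap.coe_comp, Function.comp_apply,
      LinearMap.flip_apply, map_add, map_sub, map_neg, hLg0, hRg0]
    ring
end

section
/- Let (A, ·) be a finite-dimensional left-symmetric algebra, (A*, ·_*) a left-symmetric algebra on its dual, and suppose (A, A*) is a left-symmetric bialgebra (over a point). Let H ∈ A ⊗ A and let G_H = {H♯(ξ) + ξ : ξ ∈ A*} ⊆ A ⊕ A* be the graph of H♯ in the double pre-symplectic algebra (A ⊕ A*, ⋆, (·,·)_-). Then G_H is a Dirac structure (maximal isotropic and closed under ⋆) if and only if H is symmetric and satisfies the Maurer-Cartan type equation δ_* H - ⟦H,H⟧ = 0, where δ_* H(ζ,ξ,η) = -⟨H♯(ξ), ζ ·_* η⟩ + ⟨H♯(ζ), ξ ·_* η⟩ - ⟨[ζ,ξ]_{A*},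 H♯(η)⟩ and ⟦H,H⟧(ξ₁,ξ₂,ξ₃) = ⟨ξ₁, H♯(ξ₂)·H♯(ξ₃)⟩ - ⟨ξ₂, H♯(ξ₁)·H♯(ξ₃)⟩ - ⟨ξ₃, [H♯(ξ₁),H♯(ξ₂)]⟩. -/
/-- The graph `G_H = {H♯(ξ) + ξ}` of `H ∈ A ⊗ A` in the double of a left-symmetric
bialgebra `(A, A*)` is a Dirac structure of the pre-symplectic algebra `A ⊕ A*`
if and only if `H` is symmetric and satisfies the Maurer-Cartan type equation
`δ_* H - ⟦H,H⟧ = 0`. -/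
theorem graph_dirac_iff_MaurerCartan {k A : Type*} [Field k] [AddCommGroup A]
    [Module k A] [FiniteDimensional k A]
    (mulA : A →ₗ[k] A →ₗ[k] A)
    (lsymA : ∀ x y z : A,
      mulA x (mulA y z) - mulA (mulA x y) z = mulA y (mulA x z) - mulA (mulA y x) z)
    (mulD : Module.Dual k A →ₗ[k] Module.Dual k A →ₗ[k] Module.Dual k A)
    (lsymD : ∀ ξ η ζ : Module.Dual k A,
      mulD ξ (mulD η ζ) - mulD (mulD ξ η) ζ = mulD η (mulD ξ ζ) - mulD (mulD η ξ) ζ)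
    (Ltd : Module.Dual k A → A → A)
    (hLtd : ∀ (ξ : Module.Dual k A) (x : A) (α : Module.Dual k A),
      α (Ltd ξ x) = (mulD ξ α) x)
    (adD : Module.Dual k A → A → A)
    (hadD : ∀ (ξ : Module.Dual k A) (y : A) (β : Module.Dual k A),
      β (adD ξ y) = (mulD ξ β - mulD β ξ) y)
    -- cocycle condition `δ_*[x,y]_A = 𝔏_x δ_* y - 𝔏_y δ_* x`
    (cond2 : ∀ (x y : A) (ξ η : Module.Dual k A),
      (mulD ξ η) (mulA x y - mulA y x)
        = ((mulD (ξ.comp (mulA x)) η) y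
            + (mulD ξ (η.comp (mulA x - mulA.flip x))) y)
          - ((mulD (ξ.comp (mulA y)) η) x
            + (mulD ξ (η.comp (mulA y - mulA.flip y))) x))
    -- cocycle condition `δ[ξ,η]_{A*} = 𝔏_ξ δη - 𝔏_η δξ`
    (cond1 : ∀ (ξ η : Module.Dual k A) (x y : A),
      (mulD ξ η - mulD η ξ) (mulA x y)
        = (η (mulA (Ltd ξ x) y) + η (mulA x (adD ξ y)))
          - (ξ (mulA (Ltd η x) y) + ξ (mulA x (adD η y))))
    (Lg : Module.Dual k A → A → A)
    (hLg : ∀ (ξ : Module.Dual k A) (y : A) (ζ : Module.Dual k A),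
      ζ (Lg ξ y) = -((mulD ξ ζ - mulD ζ ξ) y))
    (Rg : Module.Dual k A → A → A)
    (hRg : ∀ (η : Module.Dual k A) (x : A) (ζ : Module.Dual k A),
      ζ (Rg η x) = -((mulD ζ η) x))
    -- the pre-symplectic multiplication on the double `A ⊕ A*`
    (star : A × Module.Dual k A → A × Module.Dual k A → A × Module.Dual k A)
    (hstar : ∀ e f, star e f =
      (mulA e.1 f.1 + Lg e.2 f.1 - Rg f.2 e.1,
       mulD e.2 f.2 + (-(f.2.comp (mulA e.1 - mulA.flip e.1)))
         - (-(e.2.comp (mulA.flip f.1)))))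
    (ωm : A × Module.Dual k A → A × Module.Dual k A → k)
    (hωm : ∀ e f, ωm e f = e.2 f.1 - f.2 e.1)
    (Hs : Module.Dual k A →ₗ[k] A)
    (GH : Set (A × Module.Dual k A))
    (hGH : GH = {p | ∃ ξ : Module.Dual k A, p = (Hs ξ, ξ)}) :
    ((∀ e ∈ GH, ∀ f ∈ GH, ωm e f = 0) ∧
     (∀ e, (∀ f ∈ GH, ωm e f = 0) → e ∈ GH) ∧
     (∀ e ∈ GH, ∀ f ∈ GH, star e f ∈ GH))
    ↔ ((∀ ξ η : Module.Dual k A, η (Hs ξ) = ξ (Hs η)) ∧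
       (∀ ζ ξ η : Module.Dual k A,
         (-((mulD ζ η) (Hs ξ)) + (mulD ξ η) (Hs ζ)
            - (mulD ζ ξ - mulD ξ ζ) (Hs η))
         - (ζ (mulA (Hs ξ) (Hs η)) - ξ (mulA (Hs ζ) (Hs η))
            - η (mulA (Hs ζ) (Hs ξ) - mulA (Hs ξ) (Hs ζ))) = 0)) := by
  subst hGH
  constructor
  · rintro ⟨hiso, -, hcl⟩
    have hsym : ∀ ξ η : Module.Dual k A, η (Hs ξ) = ξ (Hs η) := by
      intro ξ η
      have h := hiso (Hs ξ, ξ) ⟨ξ, rfl⟩ (Hs η, η) ⟨η, rfl⟩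
      rw [hωm] at h
      simp only at h
      linear_combination -h
    refine ⟨hsym, ?_⟩
    intro ζ ξ η
    obtain ⟨τ, hτ⟩ := hcl (Hs ξ, ξ) ⟨ξ, rfl⟩ (Hs η, η) ⟨η, rfl⟩
    rw [hstar] at hτ
    simp only [Prod.mk.injEq] at hτ
    obtain ⟨h1, h2⟩ := hτ
    have key : ζ (mulA (Hs ξ) (Hs η) + Lg ξ (Hs η) - Rg η (Hs ξ)) = ζ (Hs τ) := by
      rw [h1]
    rw [hsym τ ζ, ← h2] at key
    simp only [map_add, map_sub, hLg, hRg, LinearMap.sub_apply, LinearMap.add_apply,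
      LinearMap.neg_apply, LinearMap.comp_apply, LinearMap.flip_apply] at key ⊢
    linear_combination -key
  · rintro ⟨hsym, hMC⟩
    refine ⟨?_, ?_, ?_⟩
    · rintro e ⟨ξ, rfl⟩ f ⟨η, rfl⟩
      rw [hωm]
      simp only
      rw [hsym η ξ]
      ring
    · rintro ⟨x, α⟩ h
      refine ⟨α, ?_⟩
      have hx : x = Hs α := by
        rw [← sub_eq_zero, ← Module.forall_dual_apply_eq_zero_iff k]
        intro η
        have := h (Hs η, η) ⟨η, rfl⟩
        rw [hωm] at this
        simp only at this
        rw [map_sub, hsym α η] at *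
        linear_combination -this
      rw [hx]
    · rintro e ⟨ξ, rfl⟩ f ⟨η, rfl⟩
      rw [hstar]
      simp only
      set τ := mulD ξ η + -(η.comp (mulA (Hs ξ) - mulA.flip (Hs ξ)))
        - -(ξ.comp (mulA.flip (Hs η))) with hτ
      refine ⟨τ, ?_⟩
      have hfst : mulA (Hs ξ) (Hs η) + Lg ξ (Hs η) - Rg η (Hs ξ) = Hs τ := by
        rw [← sub_eq_zero, ← Module.forall_dual_apply_eq_zero_iff k]
        intro ζ
        rw [map_sub, hsym τ ζ]
        have hmc := hMC ζ ξ η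
        simp only [hτ, map_add, map_sub, hLg, hRg, LinearMap.sub_apply, LinearMap.add_apply,
          LinearMap.neg_apply, LinearMap.comp_apply, LinearMap.flip_apply] at hmc ⊢
        linear_combination -hmc
      rw [hfst]
end

section
/- Let (A, ·) be a left-symmetric algebra, H ∈ A ⊗ A symmetric with H♯ invertible, and define the bilinear form B(x,y) = ⟨(H♯)⁻¹(x), y⟩ on A (symmetric since H is). Then for all ξ₁, ξ₂, ξ₃ ∈ A*: δB(H♯(ξ₁), H♯(ξ₂), H♯(ξ₃)) = ⟦H,H⟧(ξ₁, ξ₂, ξ₃), where δB(x,y,z) = -B(y, x·z) + B(x, y·z) - B([x,y], z) and ⟦H,H⟧(ξ₁,ξ₂,ξ₃) = ⟨ξ₁, H♯(ξ₂)·H♯(ξ₃)⟩ - ⟨ξ₂, H♯(ξ₁)·H♯(ξ₃)⟩ - ⟨ξ₃, [H♯(ξ₁), H♯(ξ₂)]⟩. -/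
/-- For invertible symmetric `H` with inverse bilinear form `B`, one has
`δB(H♯ξ₁, H♯ξ₂, H♯ξ₃) = ⟦H,H⟧(ξ₁, ξ₂, ξ₃)`. -/
theorem deltaB_eq_S_tensor {k A : Type*} [Field k] [AddCommGroup A] [Module k A]
    (mul : A →ₗ[k] A →ₗ[k] A)
    (lsym : ∀ x y z : A,
      mul x (mul y z) - mul (mul x y) z = mul y (mul x z) - mul (mul y x) z)
    (Hs : Module.Dual k A →ₗ[k] A)
    (Hsym : ∀ ξ η : Module.Dual k A, η (Hs ξ) = ξ (Hs η))
    (Hbij : Function.Bijective Hs)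
    (B : A → A → k)
    (hBsym : ∀ x y, B x y = B y x)
    (hB : ∀ (ξ : Module.Dual k A) (y : A), B (Hs ξ) y = ξ y) :
    ∀ ξ₁ ξ₂ ξ₃ : Module.Dual k A,
      -B (Hs ξ₂) (mul (Hs ξ₁) (Hs ξ₃)) + B (Hs ξ₁) (mul (Hs ξ₂) (Hs ξ₃))
        - B (mul (Hs ξ₁) (Hs ξ₂) - mul (Hs ξ₂) (Hs ξ₁)) (Hs ξ₃)
      = ξ₁ (mul (Hs ξ₂) (Hs ξ₃)) - ξ₂ (mul (Hs ξ₁) (Hs ξ₃))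
        - ξ₃ (mul (Hs ξ₁) (Hs ξ₂) - mul (Hs ξ₂) (Hs ξ₁)) := by
  intro ξ₁ ξ₂ ξ₃
  rw [hBsym (mul (Hs ξ₁) (Hs ξ₂) - mul (Hs ξ₂) (Hs ξ₁)) (Hs ξ₃), hB, hB, hB]
  ring
end

section
/- Let (A, ·) be a left-symmetric algebra, and for x ∈ A define 𝔏_x, R_x on A* by ⟨𝔏_x ξ, y⟩ = -⟨ξ, [x,y]⟩ and ⟨R_x ξ, y⟩ = -⟨ξ, y·x⟩. Let δ denote the left-symmetric coboundary with trivial coefficients (so (δξ)(x,y) = -⟨ξ, x·y⟩ for ξ ∈ A*, and δφ(x,y,z) = -φ(y, x·z) + φ(x, y·z) - φ([x,y], z) for 2-cochains φ). Then the Cartan-type formula 𝔏_x φ = δ(ι_x φ) + ι_x(δφ) - R_x φ holds for every 2-cochain φ ∈ A* ⊗ A*, where (ι_x φ)(y) = φ(x, y), (𝔏_x φ)(y,z) = -φ(x·y, z) - φ(y, [x,z]), and (R_x φ)(y,z) = φ(y·x, z) - φ(y, z·x). -/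
/-- Cartan-type formula `𝔏_x φ = δ(ι_x φ) + ι_x(δφ) - R_x φ` for 2-cochains
`φ ∈ A* ⊗ A*` over a left-symmetric algebra, written pointwise:
`(𝔏_x φ)(y,z) = -φ(x·y, z) - φ(y, [x,z])`,
`δ(ι_x φ)(y,z) = -φ(x, y·z)`,
`ι_x(δφ)(y,z) = -φ(y, x·z) + φ(x, y·z) - φ([x,y], z)`,
`(R_x φ)(y,z) = φ(y·x, z) - φ(y, z·x)`. -/
theorem cartan_formula_two_cochains {k A : Type*} [Field k]
    [AddCommGroup A] [Module k A]
    (mul : A →ₗ[k] A →ₗ[k] A)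
    (lsym : ∀ x y z : A,
      mul x (mul y z) - mul (mul x y) z = mul y (mul x z) - mul (mul y x) z) :
    ∀ (φ : A →ₗ[k] A →ₗ[k] k) (x y z : A),
      -φ (mul x y) z - φ y (mul x z - mul z x)
        = (-φ x (mul y z))
          + (-φ y (mul x z) + φ x (mul y z) - φ (mul x y - mul y x) z)
          - (φ (mul y x) z - φ y (mul z x)) := by
  intro φ x y z; simp [map_sub, LinearMap.sub_apply]; ring
end
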